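/- arXiv:1801.07930 — 6 statements merged into one kernel-verified Lean document; each statement's English description precedes it below -/
import Mathlib

section
/- Let j, i be positive integers with j < i. Then ∂_j(f_{i,j}) = f_{i,j+1}; equivalently, f_{i,j} − s_j(f_{i,j}) = (x_j − x_{j+1}) · f_{i,j+1}. -/
/-!
Split off the factor `ℓ = j + 1` of each product: `f_{i,j} = Σ_{k ≤ j} (x_k - x_{j+1}) Q_k` with
`Q_k = (Π_{ℓ=j+2}^{i} (x_k - x_ℓ)) x_k`, so that `f_{i,j+1} = Σ_{k ≤ j+1} Q_k` and `s_j Q_k = Q_{s_j k}`.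
For `k < j` the term `(x_k - x_{j+1}) Q_k` loses `(x_k - x_j) Q_k` under `s_j`, leaving
`(x_j - x_{j+1}) Q_k`; the term `k = j` leaves `(x_j - x_{j+1}) (Q_j + Q_{j+1})`.
-/

open MvPolynomial Finset

/-- The polynomial `f_{i,j} = Σ_{k=1}^{j} (Π_{ℓ=j+1}^{i} (x_k - x_ℓ)) x_k` in `ℚ[x_1, …]`. -/
noncomputable def fpoly (i j : ℕ) : MvPolynomial ℕ ℚ :=
  ∑ k ∈ Finset.Icc 1 j, (∏ l ∈ Finset.Icc (j + 1) i, (X k - X l)) * X k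

variable {R : Type*} [CommRing R]

lemma rename_prod_X_sub_X_of_forall_apply_eq {σ : Type*} {f : σ → σ} {s : Finset σ}
    (hs : ∀ l ∈ s, f l = l) (k : σ) :
    rename f (∏ l ∈ s, (X k - X l) : MvPolynomial σ R) = ∏ l ∈ s, (X (f k) - X l) := by
  rw [map_prod]
  exact prod_congr rfl fun l hl => by rw [map_sub, rename_X, rename_X, hs l hl]

lemma sum_X_sub_X_mul_sub_rename_swap {j : ℕ} (hj : 1 ≤ j) (Q : ℕ → MvPolynomial ℕ R)
    (hQ : ∀ k, rename (Equiv.swap j (j + 1)) (Q k) = Q (Equiv.swap j (j + 1) k)) :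
    ∑ k ∈ Icc 1 j, (X k - X (j + 1)) * Q k
        - rename (Equiv.swap j (j + 1)) (∑ k ∈ Icc 1 j, (X k - X (j + 1)) * Q k)
      = (X j - X (j + 1)) * ∑ k ∈ Icc 1 (j + 1), Q k := by
  obtain ⟨m, rfl⟩ := Nat.exists_eq_add_of_le' hj
  set σ := Equiv.swap (m + 1) (m + 1 + 1)
  have hfix : ∀ k ∈ Icc 1 m, σ k = k := fun k hk => by
    rw [mem_Icc] at hk
    exact Equiv.swap_apply_of_ne_of_ne (by omega) (by omega)
  have hlow : ∑ k ∈ Icc 1 m, (X k - X (m + 1 + 1)) * Q k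
      - ∑ k ∈ Icc 1 m, (X (σ k) - X (m + 1)) * Q (σ k)
      = (X (m + 1) - X (m + 1 + 1)) * ∑ k ∈ Icc 1 m, Q k := by
    rw [mul_sum, ← sum_sub_distrib]
    exact sum_congr rfl fun k hk => by rw [hfix k hk]; ring
  simp only [map_sum, map_mul, map_sub, rename_X, hQ]
  rw [sum_Icc_succ_top (by omega), sum_Icc_succ_top (by omega), sum_Icc_succ_top (by omega),
    sum_Icc_succ_top (by omega), Equiv.swap_apply_left, Equiv.swap_apply_right]
  linear_combination hlow

/-- Proposition 2.1 of the paper.  For `1 ≤ j < i`,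
`∂_j(f_{i,j}) = f_{i,j+1}`, stated in the equivalent multiplicative form
`f_{i,j} - s_j(f_{i,j}) = (x_j - x_{j+1}) · f_{i,j+1}`,
where `s_j` interchanges the variables `x_j` and `x_{j+1}`. -/
theorem stmt2 (i j : ℕ) (hj : 1 ≤ j) (hji : j < i) :
    fpoly i j - rename (⇑(Equiv.swap j (j + 1))) (fpoly i j)
      = (X j - X (j + 1)) * fpoly i (j + 1) := by
  set Q : ℕ → MvPolynomial ℕ ℚ := fun k => (∏ l ∈ Icc (j + 2) i, (X k - X l)) * X k
  have hQ (k : ℕ) : rename (Equiv.swap j (j + 1)) (Q k) = Q (Equiv.swap j (j + 1) k) := by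
    rw [map_mul, rename_X, rename_prod_X_sub_X_of_forall_apply_eq fun l hl => ?_]
    rw [mem_Icc] at hl
    exact Equiv.swap_apply_of_ne_of_ne (by omega) (by omega)
  have hf : fpoly i j = ∑ k ∈ Icc 1 j, (X k - X (j + 1)) * Q k := by
    refine sum_congr rfl fun k _ => ?_
    rw [← mul_prod_Ioc_eq_prod_Icc hji, ← Icc_add_one_left_eq_Ioc, mul_assoc]
    rfl
  rw [hf, sum_X_sub_X_mul_sub_rename_swap hj Q hQ]
  rfl
end

section
/- Let j, i be positive integers with j < i. Then ∂_i(f_{i,j}) = −f_{i−1,j}; equivalently, f_{i,j} − s_i(f_{i,j}) = −(x_i − x_{i+1}) · f_{i−1,j}. -/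
open MvPolynomial Finset

/-! Splitting off the factor `x_k - x_{i+1}` gives `f_{i+1,j} = A - x_{i+1} f_{i,j}`, where `A` and
`f_{i,j}` only involve `x_1, …, x_i`. Hence `s_{i+1}` fixes both and merely replaces `x_{i+1}` by
`x_{i+2}`, so `f_{i+1,j} - s_{i+1} f_{i+1,j} = -(x_{i+1} - x_{i+2}) f_{i,j}`. -/

namespace MvPolynomial

theorem rename_eq_self_of_mem_supported {σ R : Type*} [CommSemiring R] {f : σ → σ} {s : Set σ}
    {p : MvPolynomial σ R} (hp : p ∈ supported R s) (hf : ∀ x ∈ s, f x = x) :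
    rename f p = p := by
  rw [supported_eq_range_rename] at hp
  obtain ⟨q, rfl⟩ := hp
  change rename f (rename _ q) = rename _ q
  rw [rename_rename, show f ∘ Subtype.val = Subtype.val from _root_.funext fun x => hf x.1 x.2]

end MvPolynomial

theorem sum_prod_sub_mul_pow_mem_supported {i j : ℕ} (hji : j ≤ i) (e : ℕ) :
    ∑ k ∈ Icc 1 j, (∏ l ∈ Icc (j + 1) i, (X k - X l)) * X k ^ e ∈
      supported ℚ (Set.Iic i) := by
  have hX : ∀ {n}, n ≤ i → (X n : MvPolynomial ℕ ℚ) ∈ supported ℚ (Set.Iic i) :=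
    fun hn => X_mem_supported.mpr hn
  refine Subalgebra.sum_mem _ fun k hk => Subalgebra.mul_mem _ ?_ (Subalgebra.pow_mem _ ?_ e)
  · refine Subalgebra.prod_mem _ fun l hl => Subalgebra.sub_mem _ ?_ ?_
    · exact hX (by grind)
    · exact hX (mem_Icc.mp hl).2
  · exact hX (by grind)

theorem fpoly_mem_supported {i j : ℕ} (hji : j ≤ i) : fpoly i j ∈ supported ℚ (Set.Iic i) := by
  simpa [fpoly] using sum_prod_sub_mul_pow_mem_supported hji 1

theorem fpoly_succ {i j : ℕ} (hji : j ≤ i) :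
    fpoly (i + 1) j =
      ∑ k ∈ Icc 1 j, (∏ l ∈ Icc (j + 1) i, (X k - X l)) * X k ^ 2 - X (i + 1) * fpoly i j := by
  rw [fpoly, fpoly, mul_sum, ← sum_sub_distrib]
  refine sum_congr rfl fun k _ => ?_
  rw [prod_Icc_succ_top (Nat.succ_le_succ hji)]
  ring

theorem stmt3_general (i j : ℕ) (hji : j < i) :
    fpoly i j - rename (⇑(Equiv.swap i (i + 1))) (fpoly i j)
      = -((X i - X (i + 1)) * fpoly (i - 1) j) := by
  obtain ⟨m, rfl⟩ : ∃ m, i = m + 1 := ⟨i - 1, by omega⟩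
  have hjm : j ≤ m := by omega
  have hfix : ∀ n ∈ Set.Iic m, Equiv.swap (m + 1) (m + 1 + 1) n = n := fun n hn =>
    Equiv.swap_apply_of_ne_of_ne (by grind) (by grind)
  rw [fpoly_succ hjm, map_sub, map_mul, rename_X, Equiv.swap_apply_left,
    rename_eq_self_of_mem_supported (sum_prod_sub_mul_pow_mem_supported hjm 2) hfix,
    rename_eq_self_of_mem_supported (fpoly_mem_supported hjm) hfix, Nat.add_sub_cancel]
  ring

/-- equation (2.5) of the paper.  For `1 ≤ j < i`,
`∂_i(f_{i,j}) = -f_{i-1,j}`, stated in the equivalent multiplicative form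
`f_{i,j} - s_i(f_{i,j}) = -(x_i - x_{i+1}) · f_{i-1,j}`,
where `s_i` interchanges the variables `x_i` and `x_{i+1}`. -/
theorem stmt3 (i j : ℕ) (hj : 1 ≤ j) (hji : j < i) :
    fpoly i j - rename (⇑(Equiv.swap i (i + 1))) (fpoly i j)
      = -((X i - X (i + 1)) * fpoly (i - 1) j) :=
  stmt3_general i j hji
end

section
/- Let n be a positive integer and set F_n := f_{n,1} = (x_1 − x_n)(x_1 − x_{n−1}) ⋯ (x_1 − x_2) x_1. Then for all 1 ≤ j ≤ i ≤ n, f_{i,j} = (−1)^{n−i} (∂_{i+1} ∂_{i+2} ⋯ ∂_n)(∂_{j−1} ∂_{j−2} ⋯ ∂_1)(F_n), where the composed operators are applied rightmost first, i.e., first ∂_1, ∂_2, …, ∂_{j−1} and then ∂_n, ∂_{n−1}, …, ∂_{i+1} (an empty composition is the identity operator). -/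
open MvPolynomial Finset
open scoped Classical

/-- The divided difference operator `∂_r(f) = (f - s_r(f))/(x_r - x_{r+1})`, where `s_r`
interchanges the variables `x_r` and `x_{r+1}`.  It is defined as the (unique, since
`ℚ[x]` is an integral domain and `x_r - x_{r+1} ≠ 0`) polynomial `g` with
`f - s_r(f) = (x_r - x_{r+1}) · g`; such a `g` always exists. -/
noncomputable def ddiff (r : ℕ) (f : MvPolynomial ℕ ℚ) : MvPolynomial ℕ ℚ :=
  if h : ∃ g, f - rename (⇑(Equiv.swap r (r + 1))) f = (X r - X (r + 1)) * g
  then h.choose else 0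

/-- The polynomial `F_n = (x_1 - x_n)(x_1 - x_{n-1}) ⋯ (x_1 - x_2) x_1 = f_{n,1}`. -/
noncomputable def Fpoly (n : ℕ) : MvPolynomial ℕ ℚ :=
  (∏ l ∈ Finset.Icc 2 n, (X 1 - X l)) * X 1

/-!
Everything follows from two one-step identities, each proved by exhibiting `g` with
`f - s_r f = (x_r - x_{r+1}) g`, which determines `∂_r f` uniquely.
* `∂_j f_{n,j} = f_{n,j+1}` for `1 ≤ j < n`: write the terms of `f_{n,j}` as `(x_k - x_{j+1}) g_k`;
  `s_j` turns this into `(x_k - x_j) g_k` for `k < j` and into `(x_{j+1} - x_j) g_{j+1}` for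
  `k = j`, and the `g_k`, `k ≤ j + 1`, are exactly the terms of `f_{n,j+1}`.
* `∂_{i+1} f_{i+1,j} = -f_{i,j}` for `j ≤ i`: `s_{i+1}` only touches the last factor
  `x_k - x_{i+1}` of each term.

Starting from `F_n = f_{n,1}`, the operators `∂_1, …, ∂_{j-1}` climb to `f_{n,j}`, and
`∂_n, …, ∂_{i+1}` then descend to `(-1)^{n-i} f_{i,j}`.
-/

lemma ddiff_eq_of_sub_rename_eq {r : ℕ} {f g : MvPolynomial ℕ ℚ}
    (h : f - rename (Equiv.swap r (r + 1)) f = (X r - X (r + 1)) * g) : ddiff r f = g := by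
  have hex : ∃ g, f - rename (Equiv.swap r (r + 1)) f = (X r - X (r + 1)) * g := ⟨g, h⟩
  have hX : (X r - X (r + 1) : MvPolynomial ℕ ℚ) ≠ 0 :=
    sub_ne_zero.mpr fun hr => by simpa using X_injective hr
  rw [ddiff, dif_pos hex]
  exact mul_left_cancel₀ hX (hex.choose_spec.symm.trans h)

lemma ddiff_neg (r : ℕ) (f : MvPolynomial ℕ ℚ) : ddiff r (-f) = -ddiff r f := by
  by_cases h : ∃ g, f - rename (Equiv.swap r (r + 1)) f = (X r - X (r + 1)) * g
  · obtain ⟨g, hg⟩ := h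
    rw [ddiff_eq_of_sub_rename_eq hg, ddiff_eq_of_sub_rename_eq (g := -g)]
    rw [map_neg]
    linear_combination -hg
  · have h' : ¬∃ g, -f - rename (Equiv.swap r (r + 1)) (-f) = (X r - X (r + 1)) * g := by
      rintro ⟨g, hg⟩
      rw [map_neg] at hg
      exact h ⟨-g, by linear_combination -hg⟩
    rw [ddiff, ddiff, dif_neg h, dif_neg h', neg_zero]

lemma foldr_ddiff_neg (L : List ℕ) (f : MvPolynomial ℕ ℚ) :
    L.foldr ddiff (-f) = -L.foldr ddiff f := by
  induction L with
  | nil => rfl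
  | cons r L ih => rw [List.foldr_cons, List.foldr_cons, ih, ddiff_neg]

lemma rename_prod_X_sub_X {α R : Type*} [CommRing R] {σ : α → α} {s : Finset α}
    (hσ : ∀ l ∈ s, σ l = l) (k : α) :
    rename σ (∏ l ∈ s, (X k - X l) : MvPolynomial α R) = ∏ l ∈ s, (X (σ k) - X l) := by
  rw [map_prod]
  exact prod_congr rfl fun l hl => by rw [map_sub, rename_X, rename_X, hσ l hl]

lemma Fpoly_eq_fpoly_one (n : ℕ) : Fpoly n = fpoly n 1 := by
  rw [Fpoly, fpoly, Icc_self, sum_singleton]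

lemma ddiff_succ_fpoly_succ {i j : ℕ} (hji : j ≤ i) :
    ddiff (i + 1) (fpoly (i + 1) j) = -fpoly i j := by
  apply ddiff_eq_of_sub_rename_eq
  rw [fpoly, fpoly, map_sum, ← sum_sub_distrib, mul_neg, mul_sum, ← sum_neg_distrib]
  refine sum_congr rfl fun k hk => ?_
  have hfix : ∀ l ≤ i, Equiv.swap (i + 1) (i + 1 + 1) l = l := fun l hl =>
    Equiv.swap_apply_of_ne_of_ne (by omega) (by omega)
  rw [prod_Icc_succ_top (by omega), map_mul, map_mul,
    rename_prod_X_sub_X fun l hl => hfix l (mem_Icc.mp hl).2]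
  simp only [map_sub, rename_X, hfix k ((mem_Icc.mp hk).2.trans hji), Equiv.swap_apply_left]
  ring

lemma fpoly_eq_sum_X_sub_X_mul {n j : ℕ} (hjn : j < n) :
    fpoly n j = ∑ k ∈ Icc 1 j,
      (X k - X (j + 1)) * ((∏ l ∈ Icc (j + 1 + 1) n, (X k - X l)) * X k) := by
  refine sum_congr rfl fun k _ => ?_
  rw [← insert_Icc_add_one_left_eq_Icc (by omega : j + 1 ≤ n), prod_insert (by simp), mul_assoc]

lemma ddiff_fpoly_self {n j : ℕ} (hj : 1 ≤ j) (hjn : j < n) :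
    ddiff j (fpoly n j) = fpoly n (j + 1) := by
  obtain ⟨t, rfl⟩ : ∃ t, j = t + 1 := ⟨j - 1, by omega⟩
  set σ := Equiv.swap (t + 1) (t + 1 + 1)
  set g : ℕ → MvPolynomial ℕ ℚ := fun k => (∏ l ∈ Icc (t + 1 + 1 + 1) n, (X k - X l)) * X k
  have hsplit : fpoly n (t + 1)
      = ∑ k ∈ Icc 1 t, (X k - X (t + 1 + 1)) * g k + (X (t + 1) - X (t + 1 + 1)) * g (t + 1) := by
    rw [fpoly_eq_sum_X_sub_X_mul hjn, sum_Icc_succ_top (by omega)]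
  have hsucc : fpoly n (t + 1 + 1) = ∑ k ∈ Icc 1 t, g k + g (t + 1) + g (t + 1 + 1) := by
    rw [fpoly, sum_Icc_succ_top (by omega), sum_Icc_succ_top (by omega)]
  have hfix : ∀ l, l ≠ t + 1 → l ≠ t + 1 + 1 → σ l = l :=
    fun l h1 h2 => Equiv.swap_apply_of_ne_of_ne h1 h2
  have hg : ∀ k, rename σ (g k) = g (σ k) := fun k => by
    rw [map_mul, rename_X, rename_prod_X_sub_X fun l hl => ?_]
    rw [mem_Icc] at hl
    exact hfix l (by omega) (by omega)
  clear_value g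
  have hlow : ∑ k ∈ Icc 1 t, (X (σ k) - X (t + 1)) * g (σ k)
      = ∑ k ∈ Icc 1 t, (X k - X (t + 1)) * g k :=
    sum_congr rfl fun k hk => by
      rw [mem_Icc] at hk
      rw [hfix k (by omega) (by omega)]
  have hdiff : ∑ k ∈ Icc 1 t, (X k - X (t + 1 + 1)) * g k - ∑ k ∈ Icc 1 t, (X k - X (t + 1)) * g k
      = (X (t + 1) - X (t + 1 + 1)) * ∑ k ∈ Icc 1 t, g k := by
    rw [← sum_sub_distrib, mul_sum]
    exact sum_congr rfl fun _ _ => by ring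
  apply ddiff_eq_of_sub_rename_eq
  rw [hsplit, hsucc, map_add, map_sum]
  simp only [map_mul, map_sub, rename_X, hg, σ, Equiv.swap_apply_left, Equiv.swap_apply_right]
  rw [hlow]
  linear_combination hdiff

lemma foldr_ddiff_Fpoly {n t : ℕ} (ht : t < n) :
    ((List.range' 1 t).reverse).foldr ddiff (Fpoly n) = fpoly n (t + 1) := by
  induction t with
  | zero => exact Fpoly_eq_fpoly_one n
  | succ t ih =>
    rw [List.range'_concat, List.reverse_append, List.foldr_append, ih (by omega), one_mul,
      add_comm 1 t]
    exact ddiff_fpoly_self (by omega) ht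

lemma foldr_ddiff_fpoly_add {i j : ℕ} (hji : j ≤ i) (d : ℕ) :
    (List.range' (i + 1) d).foldr ddiff (fpoly (i + d) j) = (-1) ^ d * fpoly i j := by
  induction d with
  | zero => simp
  | succ d ih =>
    rw [List.range'_concat, List.foldr_append, List.foldr_cons, List.foldr_nil, one_mul,
      show i + 1 + d = i + d + 1 by omega, ← add_assoc,
      ddiff_succ_fpoly_succ (hji.trans (Nat.le_add_right i d)), foldr_ddiff_neg, ih, pow_succ]
    ring

/-- Remark 2.2 of the paper.  For `1 ≤ j ≤ i ≤ n`,
`f_{i,j} = (-1)^{n-i} (∂_{i+1} ∂_{i+2} ⋯ ∂_n)(∂_{j-1} ∂_{j-2} ⋯ ∂_1)(F_n)`,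
the composed operators being applied rightmost first (first `∂_1, …, ∂_{j-1}`,
then `∂_n, ∂_{n-1}, …, ∂_{i+1}`); an empty composition is the identity.
Moreover `F_n = f_{n,1}`. -/
theorem stmt4 (n i j : ℕ) (hj : 1 ≤ j) (hji : j ≤ i) (hin : i ≤ n) :
    Fpoly n = fpoly n 1 ∧
    fpoly i j
      = (-1 : MvPolynomial ℕ ℚ) ^ (n - i) *
          ((List.range' (i + 1) (n - i)).foldr ddiff
            (((List.range' 1 (j - 1)).reverse).foldr ddiff (Fpoly n))) := by
  refine ⟨Fpoly_eq_fpoly_one n, ?_⟩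
  obtain ⟨d, rfl⟩ := Nat.exists_eq_add_of_le hin
  rw [foldr_ddiff_Fpoly (by omega), Nat.sub_add_cancel hj, Nat.add_sub_cancel_left,
    foldr_ddiff_fpoly_add hji, ← mul_assoc, ← pow_add, Even.neg_one_pow ⟨d, rfl⟩, one_mul]
end

section
/- Let n > 2, and regard the permutations w_k^{(n−1,1)} as elements of S_n. Then w_1^{(n−1,1)} t_{1,n} = w_1^{(n,1)}, and for each k with 1 ≤ k ≤ n−2, w_k^{(n−1,1)} t_{n−1,n} = w_{k+1}^{(n,1)}. -/
open MvPolynomial Finset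

/-- The product of simple transpositions `s_a s_{a-1} ⋯ s_b` (descending indices),
where `s_r` interchanges `r` and `r+1`; the empty product (when `a < b`) is the identity. -/
def sdesc (a b : ℕ) : Equiv.Perm ℕ :=
  (((List.range' b (a + 1 - b)).reverse).map (fun r => Equiv.swap r (r + 1))).prod

/-- The product of simple transpositions `s_a s_{a+1} ⋯ s_b` (ascending indices);
the empty product (when `b < a`) is the identity. -/
def sasc (a b : ℕ) : Equiv.Perm ℕ :=
  ((List.range' a (b + 1 - a)).map (fun r => Equiv.swap r (r + 1))).prod

/-- The permutation `w_k^{(i,j)} = (s_{i-k} s_{i-k-1} ⋯ s_j)(s_{i-k+1} s_{i-k+2} ⋯ s_{i-1})`,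
regarded as a permutation of `ℕ` (supported on `{1, …, n}`). -/
def wkij (i j k : ℕ) : Equiv.Perm ℕ := sdesc (i - k) j * sasc (i - k + 1) (i - 1)

/-!
Both identities come from extending one of the two factors of `w_k^{(i,j)}` by one simple
transposition. Multiplying on the right by `s_i = t_{i,i+1}` extends the ascending factor
`s_{i-k+1} ⋯ s_{i-1}` to `s_{i-k+1} ⋯ s_i`. For `k = 1` the ascending factor is empty and
`w_1^{(i,j)} = s_{i-1} ⋯ s_j` sends `j` to `i` and fixes `i + 1`, so conjugating gives
`w_1^{(i,j)} t_{j,i+1} = t_{i,i+1} w_1^{(i,j)} = s_i s_{i-1} ⋯ s_j = w_1^{(i+1,j)}`.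
-/

open Equiv

lemma sasc_eq_one {a b : ℕ} (h : b < a) : sasc a b = 1 := by
  simp [sasc, Nat.sub_eq_zero_of_le h]

lemma sasc_succ_right {a b : ℕ} (h : a ≤ b + 1) :
    sasc a (b + 1) = sasc a b * swap (b + 1) (b + 2) := by
  rw [sasc, show b + 1 + 1 - a = b + 1 - a + 1 by omega, List.range'_concat,
    show a + 1 * (b + 1 - a) = b + 1 by omega]
  simp [sasc]

lemma sdesc_eq_one {a b : ℕ} (h : a < b) : sdesc a b = 1 := by
  simp [sdesc, Nat.sub_eq_zero_of_le h]

lemma sdesc_succ {a b : ℕ} (h : b ≤ a + 1) :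
    sdesc (a + 1) b = swap (a + 1) (a + 2) * sdesc a b := by
  rw [sdesc, show a + 1 + 1 - b = a + 1 - b + 1 by omega, List.range'_concat,
    show b + 1 * (a + 1 - b) = a + 1 by omega]
  simp [sdesc]

lemma sdesc_zero_apply_of_one_lt {b m : ℕ} (hm : 1 < m) : sdesc 0 b m = m := by
  rcases b with _ | b
  · simp [sdesc, swap_apply_of_ne_of_ne, hm.ne', (zero_lt_one.trans hm).ne']
  · rw [sdesc_eq_one (Nat.succ_pos b)]
    rfl

lemma sdesc_apply_self {a b : ℕ} (h : b ≤ a + 1) : sdesc a b b = a + 1 := by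
  induction a with
  | zero =>
    rcases Nat.le_one_iff_eq_zero_or_eq_one.mp h with rfl | rfl
    · simp [sdesc]
    · rw [sdesc_eq_one zero_lt_one]
      rfl
  | succ a ih =>
    rcases h.lt_or_eq with h | rfl
    · rw [sdesc_succ (by omega), Perm.mul_apply, ih (by omega), swap_apply_left]
    · rw [sdesc_eq_one (Nat.lt_succ_self _)]
      rfl

lemma sdesc_apply_of_lt {a b m : ℕ} (hm : a + 1 < m) : sdesc a b m = m := by
  induction a with
  | zero => exact sdesc_zero_apply_of_one_lt hm
  | succ a ih =>
    by_cases hb : b ≤ a + 1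
    · rw [sdesc_succ hb, Perm.mul_apply, ih (by omega),
        swap_apply_of_ne_of_ne (by omega) (by omega)]
    · rw [sdesc_eq_one (by omega)]
      rfl

lemma sdesc_mul_swap {a b : ℕ} (h : b ≤ a + 1) :
    sdesc a b * swap b (a + 2) = sdesc (a + 1) b := by
  rw [mul_swap_eq_swap_mul, sdesc_apply_self h, sdesc_apply_of_lt (by omega), sdesc_succ h]

lemma wkij_one (i j : ℕ) : wkij i j 1 = sdesc (i - 1) j := by
  rw [wkij, sasc_eq_one (Nat.lt_succ_self _), mul_one]

lemma wkij_one_mul_swap {i j : ℕ} (hi : 1 ≤ i) (hj : j ≤ i) :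
    wkij i j 1 * swap j (i + 1) = wkij (i + 1) j 1 := by
  obtain ⟨i, rfl⟩ : ∃ i', i = i' + 1 := ⟨i - 1, by omega⟩
  rw [wkij_one, wkij_one, Nat.add_sub_cancel, Nat.add_sub_cancel, sdesc_mul_swap hj]

lemma wkij_mul_swap {i j k : ℕ} (hi : 1 ≤ i) (hk : 1 ≤ k) :
    wkij i j k * swap i (i + 1) = wkij (i + 1) j (k + 1) := by
  obtain ⟨i, rfl⟩ : ∃ i', i = i' + 1 := ⟨i - 1, by omega⟩
  rw [wkij, wkij, mul_assoc, Nat.add_sub_cancel, Nat.add_sub_cancel, Nat.add_sub_add_right,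
    sasc_succ_right (by omega)]

/-- permutation identities in the proof of Proposition 3.2.  For `n > 2`:
`w_1^{(n-1,1)} t_{1,n} = w_1^{(n,1)}`, and for `1 ≤ k ≤ n-2`,
`w_k^{(n-1,1)} t_{n-1,n} = w_{k+1}^{(n,1)}`, where `t_{p,q}` is the transposition of
`p` and `q`. -/
theorem stmt9 (n : ℕ) (hn : 2 < n) :
    wkij (n - 1) 1 1 * Equiv.swap 1 n = wkij n 1 1 ∧
    ∀ k, 1 ≤ k → k ≤ n - 2 →
      wkij (n - 1) 1 k * Equiv.swap (n - 1) n = wkij n 1 (k + 1) := by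
  obtain ⟨i, rfl⟩ : ∃ i, n = i + 1 := ⟨n - 1, by omega⟩
  rw [Nat.add_sub_cancel]
  exact ⟨wkij_one_mul_swap (by omega) (by omega), fun k hk _ => wkij_mul_swap (by omega) hk⟩
end

section
/- Let n > 3, and regard the permutations w_k^{(n−1,1)} as elements of S_n. Then for each k with 1 ≤ k ≤ n−3, w_{k+1}^{(n−1,1)} t_{1,n−k−1} = w_k^{(n−1,1)} t_{n−k−1,n−1}. -/
open MvPolynomial Finset

/-! Products of adjacent transpositions over an interval are cycles of that interval, so
`w_k^{(i,j)}` has an explicit one-line form; with it, both sides are compared value by value. -/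

open Equiv

lemma sasc_of_le {a b : ℕ} (h : a ≤ b) : sasc a b = swap a (a + 1) * sasc (a + 1) b := by
  rw [sasc, sasc, show b + 1 - a = b + 1 - (a + 1) + 1 by omega, List.range'_succ,
    List.map_cons, List.prod_cons]

lemma sdesc_of_le {a b : ℕ} (h : b ≤ a) : sdesc a b = sdesc a (b + 1) * swap b (b + 1) := by
  rw [sdesc, sdesc, show a + 1 - b = a + 1 - (b + 1) + 1 by omega, List.range'_succ,
    List.reverse_cons, List.map_append, List.prod_append, List.map_singleton, List.prod_singleton]

lemma sasc_apply (a b x : ℕ) :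
    sasc a b x = if a ≤ x ∧ x ≤ b then x + 1 else if x = b + 1 ∧ a ≤ x then a else x := by
  obtain ⟨m, hm⟩ : ∃ m, b + 1 - a = m := ⟨_, rfl⟩
  induction m generalizing a with
  | zero =>
    rw [sasc_eq_one (by omega), Perm.one_apply]
    split_ifs <;> omega
  | succ m ih =>
    rw [sasc_of_le (by omega), Perm.mul_apply, ih (a + 1) (by omega), swap_apply_def]
    split_ifs <;> omega

lemma sdesc_apply (a b x : ℕ) :
    sdesc a b x = if x = b ∧ b ≤ a then a + 1 else if b < x ∧ x ≤ a + 1 then x - 1 else x := by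
  obtain ⟨m, hm⟩ : ∃ m, a + 1 - b = m := ⟨_, rfl⟩
  induction m generalizing b x with
  | zero =>
    rw [sdesc_eq_one (by omega), Perm.one_apply]
    split_ifs <;> omega
  | succ m ih =>
    rw [sdesc_of_le (by omega), Perm.mul_apply, swap_apply_def]
    split_ifs <;> rw [ih (b + 1) _ (by omega)] <;> split_ifs <;> omega

lemma wkij_apply {i j k : ℕ} (hk : 1 ≤ k) (hjk : j + k ≤ i) (x : ℕ) :
    wkij i j k x =
      if x = j then i - k + 1
      else if j < x ∧ x ≤ i - k then x - 1
      else if i - k < x ∧ x < i then x + 1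
      else if x = i then i - k
      else x := by
  rw [wkij, Perm.mul_apply, sasc_apply, sdesc_apply]
  split_ifs <;> omega

theorem stmt10_general (n : ℕ) :
    ∀ k, 1 ≤ k → k ≤ n - 3 →
      wkij (n - 1) 1 (k + 1) * Equiv.swap 1 (n - k - 1)
        = wkij (n - 1) 1 k * Equiv.swap (n - k - 1) (n - 1) := by
  intro k hk1 hk2
  ext x
  rw [Perm.mul_apply, Perm.mul_apply, wkij_apply (by omega) (by omega),
    wkij_apply hk1 (by omega), swap_apply_def, swap_apply_def]
  split_ifs <;> omega

/-- permutation identity in the proof of Proposition 3.2.  For `n > 3`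
and `1 ≤ k ≤ n-3`: `w_{k+1}^{(n-1,1)} t_{1,n-k-1} = w_k^{(n-1,1)} t_{n-k-1,n-1}`,
where `t_{p,q}` is the transposition of `p` and `q`. -/
theorem stmt10 (n : ℕ) (hn : 3 < n) :
    ∀ k, 1 ≤ k → k ≤ n - 3 →
      wkij (n - 1) 1 (k + 1) * Equiv.swap 1 (n - k - 1)
        = wkij (n - 1) 1 k * Equiv.swap (n - k - 1) (n - 1) :=
  stmt10_general n
end

section
/- Let 2 ≤ j < i ≤ n. Then for every k with 1 ≤ k ≤ i−j, one has w_k^{(i,j−1)} s_{j−1} = w_k^{(i,j)} in S_n. -/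
open MvPolynomial Finset

/-
Peeling the last factor `s_{j-1}` off `s_{i-k} ⋯ s_{j-1}` leaves `s_{i-k} ⋯ s_j s_{j-1}`, and
this `s_{j-1}` commutes past `s_{i-k+1} ⋯ s_{i-1}`, whose factors all move only points `> j`;
the two copies of `s_{j-1}` then cancel.
-/

lemma sdesc_eq_mul_swap {a b : ℕ} (h : b ≤ a) :
    sdesc a b = sdesc a (b + 1) * Equiv.swap b (b + 1) := by
  rw [sdesc, sdesc, show a + 1 - b = (a + 1 - (b + 1)) + 1 by omega, List.range'_succ,
    List.reverse_cons, List.map_append, List.prod_append, List.map_singleton, List.prod_singleton]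

lemma sasc_apply_of_lt {a b x : ℕ} (hx : x < a) : sasc a b x = x := by
  have hmem : sasc a b ∈ MulAction.stabilizer (Equiv.Perm ℕ) x := by
    refine list_prod_mem fun σ hσ => ?_
    obtain ⟨r, hr, rfl⟩ := List.mem_map.mp hσ
    have hra : a ≤ r := (List.mem_range'_1.mp hr).1
    exact Equiv.swap_apply_of_ne_of_ne (by omega) (by omega)
  exact hmem

lemma sasc_mul_swap {a b x y : ℕ} (hx : x < a) (hy : y < a) :
    sasc a b * Equiv.swap x y = Equiv.swap x y * sasc a b := by
  rw [Equiv.mul_swap_eq_swap_mul, sasc_apply_of_lt hx, sasc_apply_of_lt hy]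

theorem stmt12_general (i j : ℕ) (hj : 2 ≤ j) :
    ∀ k, 1 ≤ k → k ≤ i - j →
      wkij i (j - 1) k * Equiv.swap (j - 1) j = wkij i j k := by
  intro k hk1 hk2
  obtain ⟨m, rfl⟩ : ∃ m, j = m + 1 := ⟨j - 1, by omega⟩
  rw [Nat.add_sub_cancel, wkij, wkij, sdesc_eq_mul_swap (by omega), mul_assoc, mul_assoc,
    sasc_mul_swap (by omega) (by omega), Equiv.swap_mul_self_mul]

/-- permutation identity in the proof of Theorem 1.  For
`2 ≤ j < i ≤ n` and `1 ≤ k ≤ i-j`: `w_k^{(i,j-1)} s_{j-1} = w_k^{(i,j)}`,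
where `s_{j-1}` is the simple transposition of `j-1` and `j`. -/
theorem stmt12 (n i j : ℕ) (hj : 2 ≤ j) (hji : j < i) (hin : i ≤ n) :
    ∀ k, 1 ≤ k → k ≤ i - j →
      wkij i (j - 1) k * Equiv.swap (j - 1) j = wkij i j k :=
  stmt12_general i j hj
end
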